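/- arXiv:2103.03110 — 2 statements merged into one kernel-verified Lean document; each statement's English description precedes it below -/
import Mathlib

section
/- For all real numbers m > -1 and p > -1 and every complex number k with Re(k) > -1, the integral over x from 0 to 1 of (-log x)^(k+1) * (x^m - x^p) / ((x^(m+1) + 1)(x^(p+1) + 1)) dx (where (-log x)^(k+1) is the principal-branch complex power of the positive real -log x) equals (1 - 2^(-k-1)) * ζ(k+2) * Γ(k+2) * ((m+1)^(-k-2) - (p+1)^(-k-2)). -/
/-!
Substituting `x = exp (-t)` turns the integrand, times the Jacobian `x`, into
`t ^ (k + 1) * (f ((m + 1) * t) - f ((p + 1) * t))` with `f t = 1 / (exp t + 1)`, so the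
integral is a difference of Mellin transforms at `s = k + 2`. Expanding
`f t = ∑ (-1) ^ n * exp (-(n + 1) * t)` gives `mellin f s = Γ(s) η(s)`, where the alternating
zeta series `η(s) = ∑ (-1) ^ n / (n + 1) ^ s` equals `(1 - 2 ^ (1 - s)) ζ(s)`, and rescaling
`t ↦ c * t` multiplies the transform by `c ^ (-s)`.
-/

open MeasureTheory Set Real Complex Filter Asymptotics

theorem hasSum_neg_one_pow_div_nat_add_one_cpow {s : ℂ} (hs : 1 < s.re) :
    HasSum (fun n : ℕ ↦ (-1) ^ n / ((n : ℂ) + 1) ^ s) ((1 - 2 ^ (1 - s)) * riemannZeta s) := by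
  set a : ℕ → ℂ := fun n ↦ 1 / ((n : ℂ) + 1) ^ s with ha
  have hζ : HasSum a (riemannZeta s) := by
    rw [zeta_eq_tsum_one_div_nat_add_one_cpow hs]
    exact ((summable_nat_add_iff 1).mpr (Complex.summable_one_div_nat_cpow.mpr hs) |>.congr
      fun n ↦ by push_cast; rfl).hasSum
  have hodd : HasSum (fun k ↦ a (2 * k + 1)) (2 ^ (-s) * riemannZeta s) := by
    refine (hζ.mul_left _).congr_fun fun k ↦ ?_
    have hcast : ((2 * k + 1 : ℕ) : ℂ) + 1 = ((2 : ℝ) : ℂ) * ((k + 1 : ℝ) : ℂ) := by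
      push_cast; ring
    simp only [ha]
    rw [hcast, mul_cpow_ofReal_nonneg zero_le_two (by positivity), cpow_neg]
    push_cast
    field_simp
  have heven : HasSum (fun k ↦ a (2 * k)) ((1 - 2 ^ (-s)) * riemannZeta s) := by
    have h : HasSum (fun k ↦ a (2 * k)) _ :=
      (hζ.summable.comp_injective (mul_right_injective₀ (two_ne_zero' ℕ))).hasSum
    convert h using 1
    linear_combination hζ.unique (h.even_add_odd hodd)
  have h2 : (2 : ℂ) ^ (1 - s) = 2 * 2 ^ (-s) := by
    rw [sub_eq_add_neg, cpow_add _ _ two_ne_zero, cpow_one]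
  convert HasSum.even_add_odd (f := fun n : ℕ ↦ (-1) ^ n / ((n : ℂ) + 1) ^ s)
    (heven.congr_fun fun k ↦ ?_) (hodd.neg.congr_fun fun k ↦ ?_) using 1
  · rw [h2]; ring
  · simp [ha, pow_mul]
  · simp [ha, pow_succ, pow_mul, neg_div]

theorem hasSum_neg_one_pow_mul_exp_neg_nat_add_one_mul {t : ℝ} (ht : 0 < t) :
    HasSum (fun n : ℕ ↦ (-1) ^ n * (rexp (-(n + 1) * t) : ℂ)) ((rexp t : ℂ) + 1)⁻¹ := by
  have hq : ‖-(rexp (-t) : ℂ)‖ < 1 := by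
    rw [norm_neg, norm_real, norm_of_nonneg (exp_nonneg _), Real.exp_lt_one_iff]; linarith
  have hvalue : ((rexp t : ℂ) + 1)⁻¹ = rexp (-t) * (1 - -(rexp (-t) : ℂ))⁻¹ := by
    have : (rexp t : ℂ) ≠ 0 := ofReal_ne_zero.mpr (exp_pos t).ne'
    rw [Real.exp_neg]
    push_cast
    field_simp
    ring
  rw [hvalue]
  refine ((hasSum_geometric_of_norm_lt_one hq).mul_left _).congr_fun fun n ↦ ?_
  rw [neg_pow (rexp (-t) : ℂ), ← ofReal_pow, ← Real.exp_nat_mul, mul_left_comm, ← ofReal_mul,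
    ← Real.exp_add]
  ring_nf

theorem integral_zero_one_eq_integral_Ioi_exp_neg {E : Type*} [NormedAddCommGroup E]
    [NormedSpace ℝ E] (g : ℝ → E) :
    ∫ x in (0 : ℝ)..1, g x = ∫ t in Ioi 0, rexp (-t) • g (rexp (-t)) := by
  rw [intervalIntegral.integral_of_le zero_le_one, ← Real.exp_zero, ← image_exp_Iic,
    integral_image_eq_integral_abs_deriv_smul measurableSet_Iic
      (fun x _ ↦ (Real.hasDerivAt_exp x).hasDerivWithinAt) exp_injective.injOn,
    ← neg_zero, ← integral_comp_neg_Ioi]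
  simp only [abs_of_pos (exp_pos _), neg_zero]

theorem mellinConvergent_exp_add_one_inv {s : ℂ} (hs : 0 < s.re) :
    MellinConvergent (fun t : ℝ ↦ ((rexp t : ℂ) + 1)⁻¹) s := by
  have hnorm (t : ℝ) : ‖((rexp t : ℂ) + 1)⁻¹‖ = (rexp t + 1)⁻¹ := by
    rw [← ofReal_one, ← ofReal_add, ← ofReal_inv, norm_real, norm_of_nonneg (by positivity)]
  have hcont : Continuous fun t : ℝ ↦ ((rexp t : ℂ) + 1)⁻¹ :=
    (by fun_prop : Continuous fun t : ℝ ↦ (rexp t : ℂ) + 1).inv₀ fun t ↦ by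
      exact_mod_cast (by positivity : rexp t + 1 ≠ 0)
  refine mellinConvergent_of_isBigO_rpow_exp one_pos (b := 0)
    (hcont.continuousOn.locallyIntegrableOn measurableSet_Ioi) ?_ ?_ hs
  · refine IsBigO.of_bound 1 (Eventually.of_forall fun t ↦ ?_)
    rw [hnorm, neg_one_mul, norm_of_nonneg (exp_nonneg _), one_mul, Real.exp_neg]
    exact inv_anti₀ (exp_pos t) (by linarith)
  · refine IsBigO.of_bound 1 (Eventually.of_forall fun t ↦ ?_)
    rw [hnorm, neg_zero, rpow_zero, norm_one, one_mul]
    exact inv_le_one_of_one_le₀ (by linarith [exp_pos t])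

theorem mellin_exp_add_one_inv {s : ℂ} (hs : 1 < s.re) :
    mellin (fun t : ℝ ↦ ((rexp t : ℂ) + 1)⁻¹) s =
      Gamma s * ((1 - 2 ^ (1 - s)) * riemannZeta s) := by
  have hsum : Summable fun n : ℕ ↦ ‖(-1 : ℂ) ^ n‖ / ((n : ℝ) + 1) ^ s.re := by
    simpa using (summable_nat_add_iff 1).mpr (Real.summable_one_div_nat_rpow.mpr hs)
  have h := hasSum_mellin (a := fun n : ℕ ↦ (-1) ^ n) (p := fun n ↦ n + 1)
    (fun n ↦ Or.inr n.cast_add_one_pos) (by linarith)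
    (fun t ht ↦ hasSum_neg_one_pow_mul_exp_neg_nat_add_one_mul ht) hsum
  refine h.unique (((hasSum_neg_one_pow_div_nat_add_one_cpow hs).mul_left (Gamma s)).congr_fun
    fun n ↦ ?_)
  push_cast
  ring

theorem hasMellin_exp_mul_add_one_inv {c : ℝ} (hc : 0 < c) {s : ℂ} (hs : 1 < s.re) :
    HasMellin (fun t : ℝ ↦ ((rexp (c * t) : ℂ) + 1)⁻¹) s
      ((c : ℂ) ^ (-s) * (Gamma s * ((1 - 2 ^ (1 - s)) * riemannZeta s))) :=
  ⟨(MellinConvergent.comp_mul_left hc).mpr (mellinConvergent_exp_add_one_inv (by linarith)), by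
    rw [mellin_comp_mul_left (fun t : ℝ ↦ ((rexp t : ℂ) + 1)⁻¹) s hc, mellin_exp_add_one_inv hs,
      smul_eq_mul]⟩

theorem exp_neg_mul_rpow_sub_rpow_div (t m p : ℝ) :
    rexp (-t) * (rexp (-t) ^ m - rexp (-t) ^ p) /
        ((rexp (-t) ^ (m + 1) + 1) * (rexp (-t) ^ (p + 1) + 1)) =
      (rexp ((m + 1) * t) + 1)⁻¹ - (rexp ((p + 1) * t) + 1)⁻¹ := by
  have hpow (a : ℝ) : rexp (-t) ^ a = (rexp (a * t))⁻¹ := by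
    rw [← Real.exp_mul, ← Real.exp_neg]; ring_nf
  have hsucc (a : ℝ) : rexp ((a + 1) * t) = rexp t * rexp (a * t) := by
    rw [← Real.exp_add]; ring_nf
  rw [hpow, hpow, hpow, hpow, hsucc, hsucc, Real.exp_neg]
  have := exp_pos t
  have := exp_pos (m * t)
  have := exp_pos (p * t)
  field_simp
  ring

theorem integral_neg_log_cpow_mul_rpow_sub_div_add_one (m p : ℝ)
    (hm : -1 < m) (hp : -1 < p) (k : ℂ) (hk : -1 < k.re) :
    ∫ x in (0:ℝ)..1,
        ((-Real.log x : ℝ) : ℂ) ^ (k + 1) * ((x ^ m : ℝ) - (x ^ p : ℝ) : ℂ) /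
          ((((x ^ (m + 1) : ℝ) : ℂ) + 1) * (((x ^ (p + 1) : ℝ) : ℂ) + 1)) =
      (1 - (2:ℂ) ^ (-k - 1)) * riemannZeta (k + 2) * Complex.Gamma (k + 2) *
        (((m + 1 : ℝ) : ℂ) ^ (-k - 2) - ((p + 1 : ℝ) : ℂ) ^ (-k - 2)) := by
  have hs : 1 < (k + 2).re := by rw [add_re, re_ofNat]; linarith
  have hmellin_m := hasMellin_exp_mul_add_one_inv (by linarith : 0 < m + 1) hs
  have hmellin_p := hasMellin_exp_mul_add_one_inv (by linarith : 0 < p + 1) hs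
  calc
    _ = ∫ t in Ioi (0 : ℝ), (t : ℂ) ^ (k + 2 - 1) •
        (((rexp ((m + 1) * t) : ℂ) + 1)⁻¹ - ((rexp ((p + 1) * t) : ℂ) + 1)⁻¹) := by
      rw [integral_zero_one_eq_integral_Ioi_exp_neg]
      refine setIntegral_congr_fun measurableSet_Ioi fun t _ ↦ ?_
      have h := congrArg ((↑) : ℝ → ℂ) (exp_neg_mul_rpow_sub_rpow_div t m p)
      simp only [ofReal_sub, ofReal_mul, ofReal_div, ofReal_add, ofReal_inv, ofReal_one] at h
      rw [Real.log_exp, neg_neg, real_smul, smul_eq_mul, ← h, show k + 2 - 1 = k + 1 by ring]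
      ring
    _ = _ := (hasMellin_sub hmellin_m.1 hmellin_p.1).2
    _ = _ := by
      rw [hmellin_m.2, hmellin_p.2, show -(k + 2) = -k - 2 by ring,
        show 1 - (k + 2) = -k - 1 by ring]
      ring
end

section
/- The integral over x from 0 to 1 of artanh(x) / (x * √(-log x)) dx equals ((4 - √2)/4) * √π * ζ(3/2). -/
/-!
Substituting `x = exp (-t)` turns `∫₀¹ artanh x (-log x) ^ k / x dx` into
`∫₀^∞ artanh (exp (-t)) t ^ k dt`. Expanding `artanh (exp (-t)) = ∑ exp (-(2n+1) t) / (2n+1)` and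
integrating termwise (the terms are nonnegative) gives `Γ(k+1) ∑ (2n+1) ^ (-(k+2))`, and removing
the even terms from `ζ(k+2)` gives the factor `1 - 2 ^ (-(k+2))`. The theorem is the case `k = -1/2`.
-/

open Real

/-- The real inverse hyperbolic tangent, `artanh x = (1/2)(log(1+x) - log(1-x))`. -/
noncomputable def artanh (x : ℝ) : ℝ := (Real.log (1 + x) - Real.log (1 - x)) / 2

open MeasureTheory Set

lemma hasSum_artanh {x : ℝ} (hx : |x| < 1) :
    HasSum (fun n : ℕ => x ^ (2 * n + 1) / (2 * n + 1)) (_root_.artanh x) := by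
  refine ((hasSum_log_sub_log_of_abs_lt_one hx).div_const 2).congr_fun fun n => ?_
  ring

lemma setIntegral_Ioo_zero_one_eq_integral_Ioi_exp_neg {E : Type*} [NormedAddCommGroup E]
    [NormedSpace ℝ E] (g : ℝ → E) :
    ∫ x in Ioo 0 1, g x = ∫ t in Ioi 0, exp (-t) • g (exp (-t)) := by
  have himage : (fun t => exp (-t)) '' Ioi 0 = Ioo 0 1 := by
    ext x
    constructor
    · rintro ⟨t, ht, rfl⟩
      exact ⟨exp_pos _, exp_lt_one_iff.2 (neg_lt_zero.2 ht)⟩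
    · rintro ⟨h0, h1⟩
      exact ⟨-log x, neg_pos.2 (log_neg h0 h1), by simp [exp_log h0]⟩
  have hderiv : ∀ t ∈ Ioi (0 : ℝ),
      HasDerivWithinAt (fun t => exp (-t)) (-exp (-t)) (Ioi 0) t := fun t _ => by
    simpa using ((hasDerivAt_neg t).exp).hasDerivWithinAt
  have hinj : InjOn (fun t => exp (-t)) (Ioi 0) := fun a _ b _ h => neg_injective (exp_injective h)
  rw [← himage, integral_image_eq_integral_abs_deriv_smul measurableSet_Ioi hderiv hinj]
  simp only [abs_neg, abs_of_pos (exp_pos _)]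

lemma summable_odd_rpow_neg {p : ℝ} (hp : 1 < p) :
    Summable fun n : ℕ => (2 * n + 1 : ℝ) ^ (-p) := by
  have hodd : Function.Injective fun n : ℕ => 2 * n + 1 := fun a b h => by simpa using h
  refine ((summable_nat_rpow.2 (neg_lt_neg hp)).comp_injective hodd).congr fun n => ?_
  simp

lemma tsum_odd_rpow_neg {p : ℝ} (hp : 1 < p) :
    ∑' n : ℕ, (2 * n + 1 : ℝ) ^ (-p) = (1 - 2 ^ (-p)) * ∑' n : ℕ, (n : ℝ) ^ (-p) := by
  have hsum : Summable fun n : ℕ => (n : ℝ) ^ (-p) := summable_nat_rpow.2 (neg_lt_neg hp)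
  have heven : ∀ n : ℕ, ((2 * n : ℕ) : ℝ) ^ (-p) = 2 ^ (-p) * (n : ℝ) ^ (-p) := fun n => by
    push_cast
    exact mul_rpow zero_le_two n.cast_nonneg
  have hsplit := tsum_even_add_odd (f := fun n : ℕ => (n : ℝ) ^ (-p))
    (by simpa only [heven] using hsum.mul_left _) (by simpa using summable_odd_rpow_neg hp)
  simp only [heven, tsum_mul_left] at hsplit
  push_cast at hsplit
  linarith

lemma integral_Ioi_rpow_mul_exp_neg_mul_div {k r : ℝ} (hk : -1 < k) (hr : 0 < r) :
    ∫ t in Ioi 0, t ^ k * exp (-(r * t)) / r = Gamma (k + 1) * r ^ (-(k + 2)) := by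
  have h := integral_rpow_mul_exp_neg_mul_Ioi (a := k + 1) (by linarith) hr
  rw [add_sub_cancel_right] at h
  rw [integral_div, h, one_div, inv_rpow hr.le, ← rpow_neg hr.le,
    show -(k + 2) = -(k + 1) - 1 by ring, rpow_sub_one hr.ne']
  ring

lemma integral_Ioi_artanh_exp_neg_mul_rpow {k : ℝ} (hk : -1 < k) :
    ∫ t in Ioi 0, _root_.artanh (exp (-t)) * t ^ k =
      Gamma (k + 1) * ∑' n : ℕ, (2 * n + 1 : ℝ) ^ (-(k + 2)) := by
  set F : ℕ → ℝ → ℝ := fun n t => t ^ k * exp (-((2 * n + 1) * t)) / (2 * n + 1) with hF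
  have hF_integral (n : ℕ) : ∫ t in Ioi 0, F n t = Gamma (k + 1) * (2 * n + 1 : ℝ) ^ (-(k + 2)) :=
    integral_Ioi_rpow_mul_exp_neg_mul_div hk (by positivity)
  have hF_int (n : ℕ) : IntegrableOn (F n) (Ioi 0) := .of_integral_ne_zero <| by
    rw [hF_integral]
    exact mul_ne_zero (Gamma_pos_of_pos (by linarith)).ne' (by positivity)
  have hF_norm (n : ℕ) : ∫ t in Ioi 0, ‖F n t‖ = ∫ t in Ioi 0, F n t :=
    setIntegral_congr_fun measurableSet_Ioi fun t ht => norm_of_nonneg <| by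
      have : 0 < t := ht
      positivity
  have hF_tsum : ∀ t ∈ Ioi (0 : ℝ), _root_.artanh (exp (-t)) * t ^ k = ∑' n, F n t := by
    intro t ht
    have hx : |exp (-t)| < 1 := by
      rw [abs_of_pos (exp_pos _)]
      exact exp_lt_one_iff.2 (neg_lt_zero.2 ht)
    rw [← ((hasSum_artanh hx).mul_right (t ^ k)).tsum_eq]
    refine tsum_congr fun n => ?_
    rw [hF, ← exp_nat_mul]
    push_cast
    ring_nf
  calc ∫ t in Ioi 0, _root_.artanh (exp (-t)) * t ^ k = ∫ t in Ioi 0, ∑' n, F n t :=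
        setIntegral_congr_fun measurableSet_Ioi hF_tsum
    _ = ∑' n, ∫ t in Ioi 0, F n t := by
        refine (integral_tsum_of_summable_integral_norm hF_int ?_).symm
        simp only [hF_norm, hF_integral]
        exact (summable_odd_rpow_neg (by linarith)).mul_left _
    _ = Gamma (k + 1) * ∑' n : ℕ, (2 * n + 1 : ℝ) ^ (-(k + 2)) := by
        simp only [hF_integral, tsum_mul_left]

lemma riemannZeta_ofReal_eq_tsum {p : ℝ} (hp : 1 < p) :
    riemannZeta p = ((∑' n : ℕ, (n : ℝ) ^ (-p) : ℝ) : ℂ) := by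
  rw [zeta_eq_tsum_one_div_nat_cpow (by simpa using hp), Complex.ofReal_tsum]
  refine tsum_congr fun n => ?_
  rw [rpow_neg n.cast_nonneg, Complex.ofReal_inv, Complex.ofReal_cpow n.cast_nonneg, one_div]
  rfl

theorem integral_artanh_mul_neg_log_rpow_div {k : ℝ} (hk : -1 < k) :
    ((∫ x in (0 : ℝ)..1, _root_.artanh x * (-log x) ^ k / x : ℝ) : ℂ) =
      ((Gamma (k + 1) * (1 - 2 ^ (-(k + 2))) : ℝ) : ℂ) * riemannZeta (k + 2) := by
  have hsubst : ∀ t ∈ Ioi (0 : ℝ),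
      exp (-t) • (_root_.artanh (exp (-t)) * (-log (exp (-t))) ^ k / exp (-t)) =
        _root_.artanh (exp (-t)) * t ^ k := fun t _ => by
    rw [log_exp, neg_neg, smul_eq_mul, mul_div_cancel₀ _ (exp_pos _).ne']
  rw [intervalIntegral.integral_of_le zero_le_one, integral_Ioc_eq_integral_Ioo,
    setIntegral_Ioo_zero_one_eq_integral_Ioi_exp_neg,
    setIntegral_congr_fun measurableSet_Ioi hsubst,
    integral_Ioi_artanh_exp_neg_mul_rpow hk, tsum_odd_rpow_neg (by linarith),
    show (k : ℂ) + 2 = ((k + 2 : ℝ) : ℂ) by push_cast; rfl,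
    riemannZeta_ofReal_eq_tsum (by linarith)]
  push_cast
  ring

theorem integral_artanh_div_sqrt_neg_log :
    ((∫ x in (0:ℝ)..1, _root_.artanh x / (x * Real.sqrt (-Real.log x)) : ℝ) : ℂ) =
      (((4 - Real.sqrt 2) / 4 * Real.sqrt π : ℝ) : ℂ) * riemannZeta (3 / 2) := by
  -- At the endpoints both sides vanish, by the conventions `a / 0 = 0` and `0 ^ (-1/2) = 0`.
  have hintegrand : EqOn (fun x => _root_.artanh x / (x * sqrt (-log x)))
      (fun x => _root_.artanh x * (-log x) ^ (-(1 / 2) : ℝ) / x) (uIcc 0 1) := by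
    intro x hx
    have hlog : 0 ≤ -log x := neg_nonneg.2 (log_nonpos (by simpa using hx.1) (by simpa using hx.2))
    dsimp only
    rw [rpow_neg hlog, ← sqrt_eq_rpow]
    ring
  have hcoeff : 1 - (2 : ℝ) ^ (-(-(1 / 2) + 2) : ℝ) = (4 - sqrt 2) / 4 := by
    rw [show (-(-(1 / 2) + 2) : ℝ) = 1 / 2 - 2 by norm_num, rpow_sub two_pos, ← sqrt_eq_rpow]
    norm_num
    ring
  rw [intervalIntegral.integral_congr hintegrand,
    integral_artanh_mul_neg_log_rpow_div (by norm_num), hcoeff,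
    show (-(1 / 2) : ℝ) + 1 = 1 / 2 by norm_num, Gamma_one_half_eq,
    show ((-(1 / 2) : ℝ) : ℂ) + 2 = 3 / 2 by push_cast; norm_num]
  push_cast
  ring
end
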